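/- Let (E,d) be a metric space with a Borel probability measure μ. Let A₁,…,A_k be Borel sets with (μ(A₁),…,μ(A_k)) ∈ Δ_k and r := (1/2)·min_{i≠j} d(A_i,A_j) > 0. Let 0 < ε ≤ r, set A = ∪_{1≤i≤k} A_i and A₀ = E \ A_ε. Then max_{i=0,…,k} μ(A_{i,ε})/μ(A_i) ≤ (1 − μ(A))/(1 − μ(A_ε)). -/

import Mathlib

open MeasureTheory Filter Topology
open scoped ENNReal NNReal

noncomputable def localLip {E : Type*} [MetricSpace E] (f : E → ℝ) (x : E) : ℝ≥0∞ :=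
  Filter.limsup (fun y => ENNReal.ofReal (|f x - f y| / dist x y)) (𝓝[≠] x)

noncomputable def lambdaK {E : Type*} [MetricSpace E] [MeasurableSpace E]
    (μ : Measure E) (k : ℕ) : ℝ :=
  (⨅ (V : Submodule ℝ (E → ℝ)) (_ : Module.finrank ℝ V = k + 1)
      (_ : ∀ f ∈ V, MemLp f 2 μ ∧ (∫⁻ x, (localLip f x) ^ 2 ∂μ) < ⊤),
    ⨆ (f : E → ℝ) (_ : f ∈ V) (_ : f ≠ 0),
      (∫⁻ x, (localLip f x) ^ 2 ∂μ) / (∫⁻ x, ENNReal.ofReal ((f x) ^ 2) ∂μ)).toReal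

noncomputable def distSet {E : Type*} [MetricSpace E] (A B : Set E) : ℝ :=
  sInf (Set.image2 dist A B)

def memDelta {k : ℕ} (a : Fin k → ℝ) : Prop :=
  (∀ i, 0 ≤ a i ∧ a i ≤ 1) ∧ (∑ j, a j) ≤ 1 ∧ (∀ i, 1 ≤ a i + ∑ j, a j)

noncomputable def minPairDist {E : Type*} [MetricSpace E] {k : ℕ} (A : Fin k → Set E) : ℝ :=
  sInf {d : ℝ | ∃ i j : Fin k, i ≠ j ∧ d = distSet (A i) (A j)}

/-!
Since `ε ≤ r`, the `ε`-thickenings of the `Aᵢ` are pairwise disjoint, so the measures of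
`A` and `A_ε` are the sums `S = ∑ μ(Aⱼ)` and `T = ∑ μ(A_{j,ε})`. For `i ≥ 1`, `Aⱼ ⊆ A_{j,ε}` gives
`T ≥ S - μ(Aᵢ) + μ(A_{i,ε})`, and then
`μ(A_{i,ε})(1 - T) - μ(Aᵢ)(1 - S) ≤ (μ(A_{i,ε}) - μ(Aᵢ))(1 - S - μ(A_{i,ε})) ≤ 0`,
the last factor being nonpositive because `1 - S ≤ μ(Aᵢ)` (the `Δ_k` condition).
For `i = 0`, the `ε`-thickening of `E \ A_ε` misses `A`, so `μ(A_{0,ε}) ≤ 1 - μ(A)`.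
-/

open Metric Function

section Separation

variable {E : Type*} [MetricSpace E]

lemma distSet_le_dist {A B : Set E} {x y : E} (hx : x ∈ A) (hy : y ∈ B) :
    distSet A B ≤ dist x y :=
  csInf_le ⟨0, by rintro _ ⟨u, -, v, -, rfl⟩; exact dist_nonneg⟩ (Set.mem_image2_of_mem hx hy)

lemma minPairDist_le_distSet {k : ℕ} (A : Fin k → Set E) {i j : Fin k} (hij : i ≠ j) :
    minPairDist A ≤ distSet (A i) (A j) := by
  have hfin : {d : ℝ | ∃ i j : Fin k, i ≠ j ∧ d = distSet (A i) (A j)}.Finite :=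
    (Set.finite_range fun p : Fin k × Fin k => distSet (A p.1) (A p.2)).subset
      (by rintro d ⟨i, j, -, rfl⟩; exact ⟨(i, j), rfl⟩)
  exact csInf_le hfin.bddBelow ⟨i, j, hij, rfl⟩

lemma disjoint_thickening_of_two_mul_le_distSet {A B : Set E} {ε : ℝ}
    (h : 2 * ε ≤ distSet A B) : Disjoint (thickening ε A) (thickening ε B) := by
  rw [Set.disjoint_left]
  intro x hxA hxB
  obtain ⟨y, hy, hxy⟩ := mem_thickening_iff.1 hxA
  obtain ⟨z, hz, hxz⟩ := mem_thickening_iff.1 hxB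
  linarith [distSet_le_dist hy hz, dist_triangle_left y z x]

lemma pairwise_disjoint_thickening_of_le_half_minPairDist {k : ℕ} {A : Fin k → Set E} {ε : ℝ}
    (hε : ε ≤ 1 / 2 * minPairDist A) :
    Pairwise (Disjoint on fun i => thickening ε (A i)) := fun _ _ hij =>
  disjoint_thickening_of_two_mul_le_distSet (by linarith [minPairDist_le_distSet A hij])

lemma thickening_compl_thickening_subset_compl (ε : ℝ) (s : Set E) :
    thickening ε (thickening ε s)ᶜ ⊆ sᶜ := by
  intro x hx hxs
  obtain ⟨y, hy, hxy⟩ := mem_thickening_iff.1 hx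
  exact hy (mem_thickening_iff.2 ⟨x, hxs, by rwa [dist_comm]⟩)

end Separation

lemma mul_one_sub_sum_le_of_le {ι : Type*} [Fintype ι] {a b : ι → ℝ} (hab : a ≤ b)
    (ha : 0 ≤ a) (i : ι) (hi : 1 ≤ a i + ∑ j, a j) :
    b i * (1 - ∑ j, b j) ≤ a i * (1 - ∑ j, a j) := by
  have hsum : b i - a i ≤ ∑ j, b j - ∑ j, a j := by
    rw [← Finset.sum_sub_distrib]
    exact Finset.single_le_sum (f := b - a) (fun j _ => sub_nonneg.2 (hab j)) (Finset.mem_univ i)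
  nlinarith [ha i, hab i, mul_le_mul_of_nonneg_left hsum (le_trans (ha i) (hab i))]

section Measure

variable {E : Type*} [MetricSpace E] [MeasurableSpace E] [BorelSpace E] {μ : Measure E}
  [IsProbabilityMeasure μ]

lemma measureReal_thickening_compl_thickening_mul_le {s : Set E} (hs : MeasurableSet s)
    (ε : ℝ) :
    μ.real (thickening ε (thickening ε s)ᶜ) * (1 - μ.real (thickening ε s)) ≤
      μ.real (thickening ε s)ᶜ * (1 - μ.real s) := by
  rw [← probReal_compl_eq_one_sub isOpen_thickening.measurableSet,
    ← probReal_compl_eq_one_sub hs, mul_comm]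
  exact mul_le_mul_of_nonneg_left
    (measureReal_mono (thickening_compl_thickening_subset_compl ε s)) measureReal_nonneg

lemma measureReal_thickening_mul_le {ι : Type*} [Fintype ι] {A : ι → Set E}
    (hA : ∀ i, MeasurableSet (A i)) {ε : ℝ} (hε : 0 < ε)
    (hdisj : Pairwise (Disjoint on fun i => thickening ε (A i))) (i : ι)
    (hi : 1 ≤ μ.real (A i) + ∑ j, μ.real (A j)) :
    μ.real (thickening ε (A i)) * (1 - μ.real (thickening ε (⋃ j, A j))) ≤
      μ.real (A i) * (1 - μ.real (⋃ j, A j)) := by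
  have hsub : ∀ j, A j ⊆ thickening ε (A j) := fun j => self_subset_thickening hε _
  rw [thickening_iUnion,
    measureReal_iUnion_fintype hdisj fun _ => isOpen_thickening.measurableSet,
    measureReal_iUnion_fintype (hdisj.mono fun j l h => h.mono (hsub j) (hsub l)) hA]
  exact mul_one_sub_sum_le_of_le (fun j => measureReal_mono (hsub j))
    (fun _ => measureReal_nonneg) i hi

end Measure

theorem stmt6_general {E : Type*} [MetricSpace E] [MeasurableSpace E] [BorelSpace E]
    (μ : Measure E) [IsProbabilityMeasure μ]
    (k : ℕ) (A : Fin k → Set E) (hA : ∀ i, MeasurableSet (A i))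
    (hΔ : memDelta (fun i => (μ (A i)).toReal))
    (r : ℝ) (hr : r = 1 / 2 * minPairDist A)
    (ε : ℝ) (hε : 0 < ε) (hεr : ε ≤ r) :
    ((μ (Metric.thickening ε ((Metric.thickening ε (⋃ i, A i))ᶜ))).toReal *
        (1 - (μ (Metric.thickening ε (⋃ i, A i))).toReal) ≤
      (μ ((Metric.thickening ε (⋃ i, A i))ᶜ)).toReal * (1 - (μ (⋃ i, A i)).toReal)) ∧
    (∀ i, (μ (Metric.thickening ε (A i))).toReal *
        (1 - (μ (Metric.thickening ε (⋃ i, A i))).toReal) ≤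
      (μ (A i)).toReal * (1 - (μ (⋃ i, A i)).toReal)) := by
  have hdisj := pairwise_disjoint_thickening_of_le_half_minPairDist (hr ▸ hεr)
  exact ⟨measureReal_thickening_compl_thickening_mul_le (MeasurableSet.iUnion hA) ε,
    fun i => measureReal_thickening_mul_le hA hε hdisj i (hΔ.2.2 i)⟩

/-- Lemma `max_of_quotient`: for sets `A₁, …, A_k` with measures in `Δ_k` that are pairwise
`2r`-separated, `0 < ε ≤ r`, `A = ⋃ Aᵢ` and `A₀ = E \ A_ε`, each ratio
`μ(A_{i,ε})/μ(Aᵢ)`, `i = 0, …, k`, is at most `(1 - μ(A))/(1 - μ(A_ε))`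
(stated in cross-multiplied form). -/
theorem stmt6 {E : Type*} [MetricSpace E] [MeasurableSpace E] [BorelSpace E]
    (μ : Measure E) [IsProbabilityMeasure μ]
    (k : ℕ) (hk : 1 ≤ k) (A : Fin k → Set E) (hA : ∀ i, MeasurableSet (A i))
    (hΔ : memDelta (fun i => (μ (A i)).toReal))
    (r : ℝ) (hr : r = 1 / 2 * minPairDist A) (hrpos : 0 < r)
    (ε : ℝ) (hε : 0 < ε) (hεr : ε ≤ r) :
    ((μ (Metric.thickening ε ((Metric.thickening ε (⋃ i, A i))ᶜ))).toReal *
        (1 - (μ (Metric.thickening ε (⋃ i, A i))).toReal) ≤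
      (μ ((Metric.thickening ε (⋃ i, A i))ᶜ)).toReal * (1 - (μ (⋃ i, A i)).toReal)) ∧
    (∀ i, (μ (Metric.thickening ε (A i))).toReal *
        (1 - (μ (Metric.thickening ε (⋃ i, A i))).toReal) ≤
      (μ (A i)).toReal * (1 - (μ (⋃ i, A i)).toReal)) :=
  stmt6_general μ k A hA hΔ r hr ε hε hεr
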